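/- Let $(K, \Omega, \phi)$ be a proper adelic curve with height $h$, where each absolute value $|\cdot|_\omega$ is either ultrametric or of the form $\|\cdot\|^{\epsilon(\omega)}$ for a triangle-inequality absolute value, with $\int_\Omega \log^+|2|_\omega \, d\mu \le \log 2$. Then for any $\alpha, \beta \in K^\times$ with $\alpha \ne \beta$ and any measurable $U \subseteq \Omega$, $\int_U \log|\alpha - \beta|_\omega \, d\mu(\omega) \ge -\log 2 - h(\alpha) - h(\beta)$. -/

import Mathlib

/-!
By the product formula, `∫_U log|α - β| = -∫_{Uᶜ} log|α - β|`, so it suffices to bound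
`log|α - β|_ω` above by a nonnegative integrable function whose integral is at most
`log 2 + h(α) + h(β)`. Such a bound comes from `|x + y| ≤ max 1 |2| * max |x| |y|`, valid at
every place: trivially at ultrametric ones, and by Artin's argument at the others. There,
binary expansion gives `|m| ≤ k * max 1 |2| ^ k` for `m < 2 ^ k`, so expanding `(x + y) ^ n`
by the binomial theorem bounds `|x + y| ^ n` by a polynomial in `n` times
`(max 1 |2| * max |x| |y|) ^ n`; taking `n`-th roots, the polynomial factor disappears.
-/

open MeasureTheory Filter Asymptotics Finset Real

theorem le_of_isBigO_pow_mul_pow {a b : ℝ} (k : ℕ) (hb : 0 ≤ b)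
    (h : (fun n : ℕ ↦ a ^ n) =O[atTop] fun n ↦ (n : ℝ) ^ k * b ^ n) : a ≤ b := by
  by_contra! hba
  refine h.not_isLittleO (.of_forall fun n ↦ pow_ne_zero n (hb.trans_lt hba).ne') ?_
  exact isLittleO_pow_const_mul_const_pow_const_pow_of_norm_lt k (by rwa [norm_of_nonneg hb])

namespace AbsoluteValue

section Semiring

variable {R : Type*} [Semiring R] [Nontrivial R] (w : AbsoluteValue R ℝ)

theorem apply_natCast_le_of_lt_two_pow {k m : ℕ} (hm : m < 2 ^ k) :
    w m ≤ k * max 1 (w 2) ^ k := by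
  induction k generalizing m with
  | zero => simp [show m = 0 by simpa using hm]
  | succ k ih =>
    set C := max 1 (w 2)
    have hC : 1 ≤ C := le_max_left _ _
    have hrem : w (m % 2 : ℕ) ≤ C ^ (k + 1) := by
      refine le_trans ?_ (one_le_pow₀ hC)
      rcases Nat.mod_two_eq_zero_or_one m with h | h <;> simp [h]
    calc w m = w (2 * (m / 2 : ℕ) + (m % 2 : ℕ)) := by
          rw [← Nat.cast_ofNat, ← Nat.cast_mul, ← Nat.cast_add, Nat.div_add_mod]
      _ ≤ w 2 * w (m / 2 : ℕ) + w (m % 2 : ℕ) := by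
          rw [← w.map_mul]; exact w.add_le _ _
      _ ≤ C * (k * C ^ k) + C ^ (k + 1) := by
          gcongr
          · exact le_max_right _ _
          · exact ih (by omega)
      _ = (k + 1 : ℕ) * C ^ (k + 1) := by push_cast; ring

end Semiring

section CommSemiring

variable {R : Type*} [CommSemiring R] [Nontrivial R] (w : AbsoluteValue R ℝ)

theorem apply_add_pow_le (x y : R) (n : ℕ) :
    w ((x + y) ^ n) ≤ (n + 1) ^ 2 * max 1 (w 2) ^ (n + 1) * max (w x) (w y) ^ n := by
  set C := max 1 (w 2)
  set M := max (w x) (w y)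
  have hterm : ∀ j ∈ range (n + 1),
      w (x ^ j * y ^ (n - j) * (n.choose j : R)) ≤ M ^ n * ((n + 1 : ℕ) * C ^ (n + 1)) := by
    intro j hj
    have hxy : w x ^ j * w y ^ (n - j) ≤ M ^ n := by
      rw [← pow_mul_pow_sub M (Nat.lt_succ_iff.mp (mem_range.mp hj))]
      gcongr
      exacts [le_max_left _ _, le_max_right _ _]
    have hchoose : w (n.choose j : R) ≤ (n + 1 : ℕ) * C ^ (n + 1) :=
      w.apply_natCast_le_of_lt_two_pow ((Nat.choose_le_two_pow n j).trans_lt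
        (Nat.pow_lt_pow_succ one_lt_two))
    rw [w.map_mul, w.map_mul, w.map_pow, w.map_pow]
    gcongr
  calc w ((x + y) ^ n) ≤ ∑ j ∈ range (n + 1), w (x ^ j * y ^ (n - j) * (n.choose j : R)) := by
        rw [add_pow]; exact w.sum_le _ _
    _ ≤ ∑ _j ∈ range (n + 1), M ^ n * ((n + 1 : ℕ) * C ^ (n + 1)) := sum_le_sum hterm
    _ = (n + 1) ^ 2 * C ^ (n + 1) * M ^ n := by
        rw [sum_const, card_range, nsmul_eq_mul]; push_cast; ring

theorem apply_add_le_max_one_mul_max (x y : R) :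
    w (x + y) ≤ max 1 (w 2) * max (w x) (w y) := by
  set C := max 1 (w 2)
  set M := max (w x) (w y)
  have hC : 1 ≤ C := le_max_left _ _
  have hM : 0 ≤ M := (w.nonneg x).trans (le_max_left _ _)
  refine le_of_isBigO_pow_mul_pow 2 (by positivity) (IsBigO.of_bound (4 * C) ?_)
  filter_upwards [eventually_ge_atTop 1] with n hn
  have hpoly : ((n : ℝ) + 1) ^ 2 ≤ 4 * n ^ 2 := by
    have : (1 : ℝ) ≤ n := by exact_mod_cast hn
    nlinarith
  rw [norm_of_nonneg (by positivity), norm_of_nonneg (by positivity), ← w.map_pow]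
  calc w ((x + y) ^ n) ≤ (n + 1) ^ 2 * C ^ (n + 1) * M ^ n := w.apply_add_pow_le x y n
    _ ≤ 4 * n ^ 2 * C ^ (n + 1) * M ^ n := by gcongr
    _ = 4 * C * (n ^ 2 * (C * M) ^ n) := by ring

theorem rpow_apply_add_le {e : ℝ} (he : 0 ≤ e) (x y : R) :
    w (x + y) ^ e ≤ max 1 (w 2 ^ e) * max (w x ^ e) (w y ^ e) := by
  have hmono := monotoneOn_rpow_Ici_of_exponent_nonneg he
  rw [← one_rpow e, ← hmono.map_max (Set.mem_Ici.mpr zero_le_one) (w.nonneg 2),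
    ← hmono.map_max (w.nonneg x) (w.nonneg y), ← mul_rpow (by positivity) (by positivity)]
  exact rpow_le_rpow (w.nonneg _) (w.apply_add_le_max_one_mul_max x y) he

end CommSemiring

end AbsoluteValue

theorem map_neg_eq_of_map_mul {R : Type*} [Ring R] {v : R → ℝ} (hnonneg : ∀ x, 0 ≤ v x)
    (hmul : ∀ x y, v (x * y) = v x * v y) (x : R) : v (-x) = v x := by
  have hsq := hmul (-x) (-x)
  rw [neg_mul_neg, hmul] at hsq
  exact (mul_self_inj (hnonneg _) (hnonneg _)).mp hsq.symm

theorem log_apply_sub_le {R : Type*} [Ring R] {v : R → ℝ} (hnonneg : ∀ x, 0 ≤ v x)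
    (hmul : ∀ x y, v (x * y) = v x * v y)
    (hadd : ∀ x y, v (x + y) ≤ max 1 (v 2) * max (v x) (v y)) (x y : R) :
    log (v (x - y)) ≤ log⁺ (v x) + log⁺ (v y) + log⁺ (v 2) := by
  have hmax : log⁺ (max (v x) (v y)) ≤ log⁺ (v x) + log⁺ (v y) := by
    rcases max_cases (v x) (v y) with ⟨h, -⟩ | ⟨h, -⟩ <;> rw [h] <;>
      linarith [posLog_nonneg (x := v x), posLog_nonneg (x := v y)]
  have htwo : log⁺ (max 1 (v 2)) = log⁺ (v 2) := by
    rw [posLog_eq_log ((le_max_left 1 _).trans (le_abs_self _)),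
      posLog_eq_log_max_one (hnonneg 2)]
  calc log (v (x - y)) ≤ log⁺ (v (x + -y)) := by rw [← sub_eq_add_neg]; exact le_max_right _ _
    _ ≤ log⁺ (max 1 (v 2) * max (v x) (v y)) := by
        rw [← map_neg_eq_of_map_mul hnonneg hmul y]
        exact posLog_le_posLog (hnonneg _) (hadd x (-y))
    _ ≤ log⁺ (max 1 (v 2)) + log⁺ (max (v x) (v y)) := posLog_mul
    _ ≤ log⁺ (v x) + log⁺ (v y) + log⁺ (v 2) := by linarith

theorem neg_integral_le_setIntegral_of_integral_eq_zero {Ω : Type*} [MeasurableSpace Ω]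
    {μ : Measure Ω} {f g : Ω → ℝ} (hf : Integrable f μ) (hg : Integrable g μ)
    (hf0 : ∫ ω, f ω ∂μ = 0) (hfg : f ≤ g) (hg0 : 0 ≤ g) {U : Set Ω} (hU : MeasurableSet U) :
    -∫ ω, g ω ∂μ ≤ ∫ ω in U, f ω ∂μ := by
  have hsplit : ∫ ω in U, f ω ∂μ = -∫ ω in Uᶜ, f ω ∂μ := by
    rw [eq_neg_iff_add_eq_zero, integral_add_compl hU hf, hf0]
  rw [hsplit, neg_le_neg_iff]
  exact (setIntegral_mono hf.integrableOn hg.integrableOn hfg).trans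
    (setIntegral_le_integral hg (.of_forall hg0))

theorem stmt_7_general {K : Type*} [Field K] [CharZero K]
    {Ω : Type*} [MeasurableSpace Ω] (μ : Measure Ω)
    (v : Ω → K → ℝ) (eps : Ω → ℝ)
    (hnonneg : ∀ ω x, 0 ≤ v ω x)
    (hmul : ∀ ω (x y : K), v ω (x * y) = v ω x * v ω y)
    (hplaces : ∀ ω, (∀ x y : K, v ω (x + y) ≤ max (v ω x) (v ω y)) ∨
      (∃ w : AbsoluteValue K ℝ, 0 < eps ω ∧ eps ω ≤ 1 ∧ ∀ x, v ω x = w x ^ eps ω))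
    (hint : ∀ a : K, a ≠ 0 → Integrable (fun ω => Real.log (v ω a)) μ)
    (hprod : ∀ a : K, a ≠ 0 → ∫ ω, Real.log (v ω a) ∂μ = 0)
    (h2 : ∫ ω, max 0 (Real.log (v ω 2)) ∂μ ≤ Real.log 2)
    (α β : K) (hα : α ≠ 0) (hβ : β ≠ 0) (hne : α ≠ β)
    (U : Set Ω) (hU : MeasurableSet U) :
    -Real.log 2 - (∫ ω, max 0 (Real.log (v ω α)) ∂μ)
      - (∫ ω, max 0 (Real.log (v ω β)) ∂μ)
      ≤ ∫ ω in U, Real.log (v ω (α - β)) ∂μ := by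
  have hadd (ω : Ω) (x y : K) : v ω (x + y) ≤ max 1 (v ω 2) * max (v ω x) (v ω y) := by
    rcases hplaces ω with hult | ⟨w, he, -, hw⟩
    · exact (hult x y).trans
        (le_mul_of_one_le_left (le_max_of_le_left (hnonneg ω x)) (le_max_left _ _))
    · simpa only [hw] using w.rpow_apply_add_le he.le x y
  have hposLog (a : K) (ha : a ≠ 0) : Integrable (fun ω ↦ log⁺ (v ω a)) μ := by
    simpa only [posLog, max_comm] using (hint a ha).pos_part
  have hα' := hposLog α hα
  have hβ' := hposLog β hβ
  have h2' := hposLog 2 two_ne_zero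
  have hsub := sub_ne_zero.mpr hne
  have hαβ : Integrable (fun ω ↦ log⁺ (v ω α) + log⁺ (v ω β)) μ := hα'.add hβ'
  have key := neg_integral_le_setIntegral_of_integral_eq_zero
    (g := fun ω ↦ log⁺ (v ω α) + log⁺ (v ω β) + log⁺ (v ω 2)) (hint _ hsub) (hαβ.add h2')
    (hprod _ hsub) (fun ω ↦ log_apply_sub_le (hnonneg ω) (hmul ω) (hadd ω) α β)
    (fun ω ↦ add_nonneg (add_nonneg posLog_nonneg posLog_nonneg) posLog_nonneg) hU
  rw [integral_add hαβ h2', integral_add hα' hβ'] at key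
  simp only [← posLog_apply] at h2 ⊢
  linarith

theorem stmt_7 {K : Type*} [Field K] [CharZero K]
    {Ω : Type*} [MeasurableSpace Ω] (μ : Measure Ω)
    (v : Ω → K → ℝ) (eps : Ω → ℝ)
    (hnonneg : ∀ ω x, 0 ≤ v ω x)
    (hzero : ∀ ω (x : K), v ω x = 0 ↔ x = 0)
    (hmul : ∀ ω (x y : K), v ω (x * y) = v ω x * v ω y)
    (hplaces : ∀ ω, (∀ x y : K, v ω (x + y) ≤ max (v ω x) (v ω y)) ∨
      (∃ w : AbsoluteValue K ℝ, 0 < eps ω ∧ eps ω ≤ 1 ∧ ∀ x, v ω x = w x ^ eps ω))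
    (hint : ∀ a : K, a ≠ 0 → Integrable (fun ω => Real.log (v ω a)) μ)
    (hprod : ∀ a : K, a ≠ 0 → ∫ ω, Real.log (v ω a) ∂μ = 0)
    (h2 : ∫ ω, max 0 (Real.log (v ω 2)) ∂μ ≤ Real.log 2)
    (α β : K) (hα : α ≠ 0) (hβ : β ≠ 0) (hne : α ≠ β)
    (U : Set Ω) (hU : MeasurableSet U) :
    -Real.log 2 - (∫ ω, max 0 (Real.log (v ω α)) ∂μ)
      - (∫ ω, max 0 (Real.log (v ω β)) ∂μ)
      ≤ ∫ ω in U, Real.log (v ω (α - β)) ∂μ :=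
  stmt_7_general μ v eps hnonneg hmul hplaces hint hprod h2 α β hα hβ hne U hU
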